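/- Let K be any CRG with at most w white vertices and at most b black vertices, where w+b ≥ 1. Then for every p ∈ (0,1), g_K(p) ≥ g_{K(w,b)}(p) = (w/p + b/(1−p))⁻¹. -/

import Mathlib

open Finset

inductive EColor | white | black | gray
deriving DecidableEq

/-- The `p`-weight of an edge color: `p` for white, `1-p` for black, `0` for gray. -/
def wval (p : ℝ) : EColor → ℝ
  | .white => p
  | .black => 1 - p
  | .gray => 0

/-- The matrix `M_K(p)` of a CRG given by vertex colors `vb` (`true` = black)
and edge colors `ec`. -/
def Mmat {V : Type*} [DecidableEq V] (vb : V → Bool) (ec : V → V → EColor) (p : ℝ)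
    (x y : V) : ℝ :=
  if x = y then (if vb x then 1 - p else p) else wval p (ec x y)

/-- `μ` is a probability mass. -/
def IsProb {V : Type*} [Fintype V] (μ : V → ℝ) : Prop :=
  (∀ x, 0 ≤ μ x) ∧ ∑ x, μ x = 1

/-- The quadratic form `⟨μ, M_K(p) μ⟩`. -/
def QF {V : Type*} [Fintype V] [DecidableEq V] (vb : V → Bool) (ec : V → V → EColor)
    (p : ℝ) (μ : V → ℝ) : ℝ :=
  ∑ x, ∑ y, μ x * Mmat vb ec p x y * μ y

/-- `g` is the minimum of the quadratic form over probability masses, i.e. `g = g_K(p)`. -/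
def gIs {V : Type*} [Fintype V] [DecidableEq V] (vb : V → Bool) (ec : V → V → EColor)
    (p g : ℝ) : Prop :=
  IsLeast {t | ∃ μ : V → ℝ, IsProb μ ∧ t = QF vb ec p μ} g

/-- The weighted gray-degree `d_G(u) = ∑_{v : uv gray} μ(v)`. -/
def grayDeg {V : Type*} [Fintype V] [DecidableEq V] (ec : V → V → EColor) (μ : V → ℝ)
    (u : V) : ℝ :=
  ∑ v ∈ Finset.univ.filter (fun v => v ≠ u ∧ ec u v = EColor.gray), μ v

/-!
Only the diagonal of `M_K(p)` matters: all entries are nonnegative, so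
`⟨μ, M_K(p) μ⟩ ≥ ∑ₓ dₓ μₓ²` with `dₓ ∈ {p, 1 - p}` the diagonal entry. By Sedrakyan's form of
Cauchy–Schwarz, `∑ₓ dₓ μₓ² ≥ (∑ₓ μₓ)² / ∑ₓ dₓ⁻¹ = (#white / p + #black / (1 - p))⁻¹`, and
the right-hand side only decreases when the vertex counts are replaced by the bounds `w` and `b`.
-/

open Finset

section CRG

variable {V : Type*} [DecidableEq V] (vb : V → Bool) (ec : V → V → EColor) {p : ℝ}

lemma wval_nonneg (hp0 : 0 ≤ p) (hp1 : p ≤ 1) (c : EColor) : 0 ≤ wval p c := by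
  cases c <;> simp only [wval] <;> linarith

lemma Mmat_nonneg (hp0 : 0 ≤ p) (hp1 : p ≤ 1) (x y : V) : 0 ≤ Mmat vb ec p x y := by
  unfold Mmat
  split_ifs
  · linarith
  · exact hp0
  · exact wval_nonneg hp0 hp1 _

lemma Mmat_self_pos (hp0 : 0 < p) (hp1 : p < 1) (x : V) : 0 < Mmat vb ec p x x := by
  simp only [Mmat]
  split_ifs <;> linarith

lemma sum_Mmat_self_mul_sq_le_QF [Fintype V] (hp0 : 0 ≤ p) (hp1 : p ≤ 1) {μ : V → ℝ}
    (hμ : ∀ x, 0 ≤ μ x) :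
    ∑ x, Mmat vb ec p x x * μ x ^ 2 ≤ QF vb ec p μ := by
  refine sum_le_sum fun x _ => ?_
  calc Mmat vb ec p x x * μ x ^ 2 = μ x * Mmat vb ec p x x * μ x := by ring
    _ ≤ ∑ y, μ x * Mmat vb ec p x y * μ y :=
      single_le_sum (f := fun y => μ x * Mmat vb ec p x y * μ y)
        (fun y _ => mul_nonneg (mul_nonneg (hμ x) (Mmat_nonneg vb ec hp0 hp1 x y)) (hμ y))
        (mem_univ x)

lemma inv_sum_inv_Mmat_self_le_QF [Fintype V] (hp0 : 0 < p) (hp1 : p < 1) {μ : V → ℝ}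
    (hμ : IsProb μ) :
    (∑ x, (Mmat vb ec p x x)⁻¹)⁻¹ ≤ QF vb ec p μ := by
  have hd := Mmat_self_pos vb ec hp0 hp1
  calc (∑ x, (Mmat vb ec p x x)⁻¹)⁻¹ = (∑ x, μ x) ^ 2 / ∑ x, (Mmat vb ec p x x)⁻¹ := by
        rw [hμ.2, one_pow, one_div]
    _ ≤ ∑ x, μ x ^ 2 / (Mmat vb ec p x x)⁻¹ :=
        sq_sum_div_le_sum_sq_div _ _ fun x _ => inv_pos.2 (hd x)
    _ = ∑ x, Mmat vb ec p x x * μ x ^ 2 := by simp only [div_inv_eq_mul, mul_comm]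
    _ ≤ QF vb ec p μ := sum_Mmat_self_mul_sq_le_QF vb ec hp0.le hp1.le hμ.1

lemma sum_inv_Mmat_self [Fintype V] :
    ∑ x, (Mmat vb ec p x x)⁻¹ = ((Finset.univ.filter fun x => vb x = false).card : ℝ) / p
      + ((Finset.univ.filter fun x => vb x = true).card : ℝ) / (1 - p) := by
  simp [Mmat, apply_ite, sum_ite, div_eq_mul_inv, add_comm]

end CRG

theorem stmt4_general {V : Type*} [Fintype V] [DecidableEq V]
    (vb : V → Bool) (ec : V → V → EColor) (p g : ℝ) (hp0 : 0 < p) (hp1 : p < 1)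
    (w b : ℕ)
    (hw : (Finset.univ.filter fun x => vb x = false).card ≤ w)
    (hb : (Finset.univ.filter fun x => vb x = true).card ≤ b)
    (hg : gIs vb ec p g) :
    ((w : ℝ) / p + (b : ℝ) / (1 - p))⁻¹ ≤ g := by
  obtain ⟨⟨μ, hμ, rfl⟩, -⟩ := hg
  have hV : (univ : Finset V).Nonempty := nonempty_of_sum_ne_zero (hμ.2 ▸ one_ne_zero)
  have hpos : 0 < ∑ x, (Mmat vb ec p x x)⁻¹ :=
    sum_pos (fun x _ => inv_pos.2 (Mmat_self_pos vb ec hp0 hp1 x)) hV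
  have h1p : 0 < 1 - p := sub_pos.2 hp1
  calc ((w : ℝ) / p + (b : ℝ) / (1 - p))⁻¹ ≤ (∑ x, (Mmat vb ec p x x)⁻¹)⁻¹ := by
        refine inv_anti₀ hpos ?_
        rw [sum_inv_Mmat_self]
        gcongr
    _ ≤ QF vb ec p μ := inv_sum_inv_Mmat_self_le_QF vb ec hp0 hp1 hμ

/-- any CRG with at most `w` white and at most `b` black vertices has
`g_K(p) ≥ g_{K(w,b)}(p) = (w/p + b/(1-p))⁻¹`. -/
theorem stmt4 {V : Type*} [Fintype V] [DecidableEq V]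
    (vb : V → Bool) (ec : V → V → EColor) (p g : ℝ) (hp0 : 0 < p) (hp1 : p < 1)
    (w b : ℕ) (hwb : 1 ≤ w + b)
    (hw : (Finset.univ.filter fun x => vb x = false).card ≤ w)
    (hb : (Finset.univ.filter fun x => vb x = true).card ≤ b)
    (hg : gIs vb ec p g) :
    ((w : ℝ) / p + (b : ℝ) / (1 - p))⁻¹ ≤ g :=
  stmt4_general vb ec p g hp0 hp1 w b hw hb hg
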